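/- arXiv:1401.2903 — 4 statements merged into one kernel-verified Lean document; each statement's English description precedes it below -/
import Mathlib

section
/- Every seminorm p on a *-algebra A satisfying the C*-condition p(a*a) = p(a)^2 for all a ∈ A is *-preserving, i.e., p(a*) = p(a) for all a ∈ A. -/
/-!
Polarization, `2 (x⋆y + y⋆x) = (x + y)⋆(x + y) - (x - y)⋆(x - y)`, gives
`p (x⋆y + y⋆x) ≤ (p x + p y)²`; rescaling `x` and `y` by natural numbers (the only scalars known
to commute with `⋆`) sharpens this to `p (x⋆y + y⋆x) ≤ 4 p x p y`. For self-adjoint `h` the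
C*-condition gives `p (h ^ 2ᵏ) = p h ^ 2ᵏ`, and the sharpened bound then controls `h ^ (2ᵏ - 1)`.
Applying both to `(a a⋆) ^ 2ᵏ = a (a⋆a) ^ (2ᵏ - 1) a⋆` shows that `r = p a⋆ / p a` satisfies
`(r²) ^ 2ᵏ ≤ 2ᵏ (8 r² + 4 r)` for every `k`, which forces `r ≤ 1`.
-/

open Filter Topology

theorem le_four_mul_of_forall_nat_mul_le {P X Y : ℝ} (hX : 0 ≤ X) (hY : 0 ≤ Y)
    (h : ∀ m n : ℕ, m * n * P ≤ (m * X + n * Y) ^ 2) : P ≤ 4 * X * Y := by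
  by_contra! hlt
  set δ := P - 4 * X * Y
  have hδ : 0 < δ := by linarith
  have key (m n : ℕ) : m * n * δ ≤ (m * X - n * Y) ^ 2 := by nlinarith [h m n]
  rcases hX.eq_or_lt with rfl | hX
  · obtain ⟨m, hm⟩ := exists_nat_gt (Y ^ 2 / δ)
    have := key m 1
    rw [div_lt_iff₀ hδ] at hm
    norm_num at this
    linarith
  · obtain ⟨n, hn⟩ := exists_nat_gt (X ^ 2 / δ)
    rw [div_lt_iff₀ hδ] at hn
    have hfloor := Nat.floor_le (div_nonneg (mul_nonneg n.cast_nonneg hY) hX.le)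
    have hlt := Nat.lt_floor_add_one (n * Y / X)
    rw [le_div_iff₀ hX] at hfloor
    rw [div_lt_iff₀ hX] at hlt
    have := key (⌊n * Y / X⌋₊ + 1) n
    push_cast at this
    nlinarith [n.cast_nonneg (α := ℝ)]

theorem le_one_of_forall_pow_two_pow_le {R C : ℝ} (h : ∀ k : ℕ, R ^ 2 ^ k ≤ 2 ^ k * C) :
    R ≤ 1 := by
  by_contra! hR
  have hC : 0 < C := one_pos.trans (hR.trans_le (by simpa using h 0))
  have hlim : Tendsto (fun k : ℕ => ((2 ^ k : ℕ) : ℝ) ^ 1 / R ^ 2 ^ k) atTop (𝓝 0) :=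
    (tendsto_pow_const_div_const_pow_of_one_lt 1 hR).comp
      (tendsto_pow_atTop_atTop_of_one_lt one_lt_two)
  obtain ⟨k, hk⟩ := (hlim.eventually (gt_mem_nhds (inv_pos.2 hC))).exists
  rw [div_lt_iff₀ (by positivity)] at hk
  push_cast at hk
  have := h k
  field_simp at hk
  nlinarith

namespace Seminorm

theorem map_nsmul {𝕜 E : Type*} [RCLike 𝕜] [AddCommGroup E] [Module 𝕜 E]
    (p : Seminorm 𝕜 E) (n : ℕ) (x : E) : p (n • x) = n * p x := by
  rw [← Nat.cast_smul_eq_nsmul 𝕜, map_smul_eq_mul, RCLike.norm_natCast]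

variable {𝕜 A : Type*} [RCLike 𝕜] [Ring A] [StarRing A] [Module 𝕜 A]

def IsCStar (p : Seminorm 𝕜 A) : Prop := ∀ a : A, p (star a * a) = p a ^ 2

namespace IsCStar

variable {p : Seminorm 𝕜 A}

theorem map_one_le (hp : p.IsCStar) : p 1 ≤ 1 := by
  have h := hp 1
  rw [star_one, one_mul] at h
  nlinarith [apply_nonneg p 1]

theorem map_sq_of_isSelfAdjoint (hp : p.IsCStar) {h : A} (hh : IsSelfAdjoint h) :
    p (h ^ 2) = p h ^ 2 := by
  have h2 := hp h
  rwa [hh.star_eq, ← sq] at h2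

theorem map_pow_two_pow (hp : p.IsCStar) {h : A} (hh : IsSelfAdjoint h) (k : ℕ) :
    p (h ^ 2 ^ k) = p h ^ 2 ^ k := by
  induction k with
  | zero => simp
  | succ k ih => rw [pow_succ, pow_mul, pow_mul, hp.map_sq_of_isSelfAdjoint (hh.pow _), ih]

theorem map_star_mul_add_star_mul_le_sq (hp : p.IsCStar) (x y : A) :
    p (star x * y + star y * x) ≤ (p x + p y) ^ 2 := by
  have polarization : 2 • (star x * y + star y * x) =
      star (x + y) * (x + y) - star (x - y) * (x - y) := by
    simp only [star_add, star_sub]; noncomm_ring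
  have hdiff := map_sub_le_add p (star (x + y) * (x + y)) (star (x - y) * (x - y))
  rw [← polarization, map_nsmul, hp, hp] at hdiff
  have hadd : p (x + y) ^ 2 ≤ (p x + p y) ^ 2 :=
    pow_le_pow_left₀ (apply_nonneg p _) (map_add_le_add p x y) 2
  have hsub : p (x - y) ^ 2 ≤ (p x + p y) ^ 2 :=
    pow_le_pow_left₀ (apply_nonneg p _) (map_sub_le_add p x y) 2
  push_cast at hdiff
  linarith

theorem map_star_mul_add_star_mul_le (hp : p.IsCStar) (x y : A) :
    p (star x * y + star y * x) ≤ 4 * p x * p y := by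
  refine le_four_mul_of_forall_nat_mul_le (apply_nonneg p x) (apply_nonneg p y) fun m n => ?_
  have h := hp.map_star_mul_add_star_mul_le_sq (m • x) (n • y)
  rwa [star_nsmul, star_nsmul, smul_mul_smul_comm, smul_mul_smul_comm, mul_comm n, ← smul_add,
    map_nsmul, map_nsmul, map_nsmul, Nat.cast_mul] at h

theorem map_pow_two_pow_sub_one_le (hp : p.IsCStar) {h : A} (hh : IsSelfAdjoint h) (k : ℕ) :
    p (h ^ (2 ^ k - 1)) ≤ 2 ^ k * p h ^ (2 ^ k - 1) := by
  induction k with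
  | zero => simpa using hp.map_one_le
  | succ k ih =>
    have hexp : 2 ^ (k + 1) - 1 = 2 ^ k + (2 ^ k - 1) := by
      have := Nat.one_le_two_pow (n := k); rw [pow_succ]; omega
    have hpol := hp.map_star_mul_add_star_mul_le (h ^ 2 ^ k) (h ^ (2 ^ k - 1))
    rw [(hh.pow _).star_eq, (hh.pow _).star_eq, ← pow_add, ← pow_add, add_comm (2 ^ k - 1),
      ← two_nsmul, map_nsmul, hp.map_pow_two_pow hh] at hpol
    have hle : p h ^ 2 ^ k * p (h ^ (2 ^ k - 1)) ≤ p h ^ 2 ^ k * (2 ^ k * p h ^ (2 ^ k - 1)) :=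
      mul_le_mul_of_nonneg_left ih (pow_nonneg (apply_nonneg p h) _)
    rw [hexp, pow_succ, pow_add (p h)]
    push_cast at hpol
    nlinarith

theorem map_mul_mul_star_le (hp : p.IsCStar) {h : A} (hh : IsSelfAdjoint h) (a : A) :
    p (a * h * star a) ≤ 2 * p (star a) * p (h * star a) := by
  have hpol := hp.map_star_mul_add_star_mul_le (star a) (h * star a)
  rw [star_star, star_mul, star_star, hh.star_eq, ← mul_assoc, ← two_nsmul, map_nsmul] at hpol
  push_cast at hpol
  linarith

theorem map_mul_le_add (hp : p.IsCStar) {h : A} (hh : IsSelfAdjoint h) (b : A) :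
    p (h * b) ≤ 4 * p h * p b + p (star b * h) := by
  have hpol := hp.map_star_mul_add_star_mul_le h b
  rw [hh.star_eq] at hpol
  have htri := map_sub_le_add p (h * b + star b * h) (star b * h)
  rw [add_sub_cancel_right] at htri
  linarith

theorem map_mul_star_mul_self_pow_le (hp : p.IsCStar) (a : A) (k : ℕ) :
    p (a * (star a * a) ^ (2 ^ k - 1)) ≤ 2 ^ (k + 1) * p a * (p a ^ 2) ^ (2 ^ k - 1) := by
  have hu := IsSelfAdjoint.star_mul_self a
  have hexp : 2 ^ (k + 1) - 1 = 2 ^ k - 1 + 1 + (2 ^ k - 1) := by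
    have := Nat.one_le_two_pow (n := k); rw [pow_succ]; omega
  have hsq : p (a * (star a * a) ^ (2 ^ k - 1)) ^ 2 = p ((star a * a) ^ (2 ^ (k + 1) - 1)) := by
    rw [← hp, star_mul, (hu.pow _).star_eq, hexp, pow_add, pow_succ]
    simp only [mul_assoc]
  have hbound := hp.map_pow_two_pow_sub_one_le hu (k + 1)
  rw [← hsq, hp a, hexp] at hbound
  refine le_of_pow_le_pow_left₀ two_ne_zero (by positivity) (hbound.trans ?_)
  have h2 : (2 : ℝ) ^ (k + 1) ≤ (2 ^ (k + 1)) ^ 2 :=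
    le_self_pow₀ (one_le_pow₀ one_le_two) two_ne_zero
  calc (2 : ℝ) ^ (k + 1) * (p a ^ 2) ^ (2 ^ k - 1 + 1 + (2 ^ k - 1))
      ≤ (2 ^ (k + 1)) ^ 2 * (p a ^ 2) ^ (2 ^ k - 1 + 1 + (2 ^ k - 1)) :=
        mul_le_mul_of_nonneg_right h2 (by positivity)
    _ = (2 ^ (k + 1) * p a * (p a ^ 2) ^ (2 ^ k - 1)) ^ 2 := by ring

theorem sq_map_star_pow_two_pow_le (hp : p.IsCStar) (a : A) (k : ℕ) :
    (p (star a) ^ 2) ^ 2 ^ k ≤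
      2 ^ k * (8 * p (star a) ^ 2 + 4 * p (star a) * p a) * (p a ^ 2) ^ (2 ^ k - 1) := by
  have hu := IsSelfAdjoint.star_mul_self a
  have hm := hu.pow (2 ^ k - 1)
  have hpow : (a * star a) ^ 2 ^ k = a * (star a * a) ^ (2 ^ k - 1) * star a := by
    rw [← Nat.sub_add_cancel (Nat.one_le_two_pow (n := k)), Nat.add_sub_cancel, pow_succ,
      ← mul_assoc, mul_pow_mul]
  have hpv : p ((a * star a) ^ 2 ^ k) = (p (star a) ^ 2) ^ 2 ^ k := by
    rw [hp.map_pow_two_pow (IsSelfAdjoint.mul_star_self a), ← hp (star a), star_star]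
  have hsandwich := hp.map_mul_mul_star_le hm a
  have hsplit := hp.map_mul_le_add hm (star a)
  have hu_pow := hp.map_pow_two_pow_sub_one_le hu k
  have hau := hp.map_mul_star_mul_self_pow_le a k
  rw [← hpow, hpv] at hsandwich
  rw [star_star] at hsplit
  rw [hp a] at hu_pow
  have hs := apply_nonneg p (star a)
  calc (p (star a) ^ 2) ^ 2 ^ k
      ≤ 2 * p (star a) * (4 * (2 ^ k * (p a ^ 2) ^ (2 ^ k - 1)) * p (star a)
          + 2 ^ (k + 1) * p a * (p a ^ 2) ^ (2 ^ k - 1)) := by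
        refine hsandwich.trans (mul_le_mul_of_nonneg_left (hsplit.trans ?_) (by positivity))
        gcongr
    _ = 2 ^ k * (8 * p (star a) ^ 2 + 4 * p (star a) * p a) * (p a ^ 2) ^ (2 ^ k - 1) := by ring

theorem map_star_le (hp : p.IsCStar) (a : A) : p (star a) ≤ p a := by
  have hs := apply_nonneg p (star a)
  rcases (apply_nonneg p a).eq_or_lt with hzero | hpos
  · have h := hp.sq_map_star_pow_two_pow_le a 1
    rw [← hzero] at h
    norm_num at h
    rw [← hzero]
    nlinarith [pow_nonneg hs 4]
  · set r := p (star a) / p a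
    have hsr : p (star a) = r * p a := (div_mul_cancel₀ _ hpos.ne').symm
    suffices r ^ 2 ≤ 1 by
      rw [hsr]
      nlinarith [div_nonneg hs hpos.le]
    refine le_one_of_forall_pow_two_pow_le (C := 8 * r ^ 2 + 4 * r) fun k => ?_
    have h := hp.sq_map_star_pow_two_pow_le a k
    have ht : 0 < (p a ^ 2) ^ 2 ^ k := by positivity
    refine le_of_mul_le_mul_right ?_ ht
    calc (r ^ 2) ^ 2 ^ k * (p a ^ 2) ^ 2 ^ k = (p (star a) ^ 2) ^ 2 ^ k := by rw [hsr]; ring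
      _ ≤ _ := h
      _ = 2 ^ k * (8 * r ^ 2 + 4 * r) * (p a ^ 2 * (p a ^ 2) ^ (2 ^ k - 1)) := by rw [hsr]; ring
      _ = 2 ^ k * (8 * r ^ 2 + 4 * r) * (p a ^ 2) ^ 2 ^ k := by
        rw [← pow_succ', Nat.sub_add_cancel (Nat.one_le_two_pow)]

end IsCStar

end Seminorm

/-- Every seminorm `p` on a `*`-algebra `A` satisfying the C*-condition
`p (a* a) = p a ^ 2` is `*`-preserving. -/
theorem cstar_seminorm_star_preserving {A : Type*} [Ring A] [StarRing A] [Algebra ℂ A]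
    (p : Seminorm ℂ A) (hC : ∀ a : A, p (star a * a) = p a ^ 2) :
    ∀ a : A, p (star a) = p a := by
  have hp : p.IsCStar := hC
  intro a
  refine le_antisymm (hp.map_star_le a) ?_
  simpa only [star_star] using hp.map_star_le (star a)
end

section
/- Let h : X → X be a homeomorphism of a compactly countably generated space X = lim_→ K_n such that for each n there is m with h^k(K_n) ⊆ K_m for all integers k. Then α_n(f) := f ∘ h^n defines a strongly bounded action of ℤ on the pro-C*-algebra C(X); if moreover h(K_n) = K_n for all n, then α is an inverse limit action (p_{K_n}(α_k(f)) = p_{K_n}(f) for all k, n, f). -/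
/-!
Both parts compare suprema of `‖f‖` over sets related by an iterate `h^k`. If `h^k` maps `K n`
into the compact set `K m`, the supremum over `K n` of `‖f ∘ h^k‖` is bounded by the (finite)
supremum over `K m`. If `h` preserves `K n`, so does every `h^k` (induct in both directions,
using injectivity of `h`), and then both suprema are the supremum of one and the same set of values.
-/

open Set Function

theorem iSup_norm_comp_le_of_mapsTo {α X E : Type*} [TopologicalSpace X]
    [SeminormedAddCommGroup E] {f : X → E} {S : Set α} {T : Set X} {g : α → X}
    (hf : ContinuousOn f T) (hT : IsCompact T) (hg : MapsTo g S T) :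
    ⨆ x : S, ‖f (g x)‖ ≤ ⨆ x : T, ‖f x‖ := by
  have hbdd : BddAbove (range fun x : T => ‖f x‖) := by
    simpa only [image_eq_range] using hT.bddAbove_image hf.norm
  exact Real.iSup_le (fun x => le_ciSup_of_le hbdd ⟨g x, hg x.2⟩ le_rfl)
    (Real.iSup_nonneg fun _ => norm_nonneg _)

theorem iSup_comp_eq_of_image_eq {α β γ : Type*} [SupSet γ] {F : β → γ} {S : Set α}
    {T : Set β} {g : α → β} (hg : g '' S = T) :
    ⨆ x : S, F (g x) = ⨆ x : T, F x := by
  rw [← sSup_image', ← hg, image_image, sSup_image']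

theorem image_comp_eq_self_iff {α : Type*} {f g : α → α} {S : Set α}
    (hf : Injective f) (hS : f '' S = S) : (f ∘ g) '' S = S ↔ g '' S = S := by
  rw [image_comp, ← hf.image_injective.eq_iff (a := g '' S) (b := S), hS]

theorem image_iterates_eq_self {α : Type*} {h : α → α} {hpow : ℤ → α → α}
    (hpow_zero : hpow 0 = id) (hpow_succ : ∀ k, hpow (k + 1) = h ∘ hpow k)
    (hh : Injective h) {S : Set α} (hS : h '' S = S) (k : ℤ) : hpow k '' S = S := by
  induction k using Int.induction_on with
  | zero => rw [hpow_zero, image_id]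
  | succ i ih => rwa [hpow_succ, image_comp_eq_self_iff hh hS]
  | pred i ih => rwa [← image_comp_eq_self_iff hh hS, ← hpow_succ, sub_add_cancel]

theorem homeo_iterates_action_strongly_bounded_general
    {X : Type*} [TopologicalSpace X]
    (h : X ≃ₜ X)
    (hpow : ℤ → X ≃ₜ X)
    (hpow_zero : hpow 0 = Homeomorph.refl X)
    (hpow_succ : ∀ k : ℤ, hpow (k + 1) = (hpow k).trans h)
    (K : ℕ → Set X)
    (hKcompact : ∀ n, IsCompact (K n))
    (hhK : ∀ n, ∃ m, ∀ k : ℤ, (hpow k) '' K n ⊆ K m) :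
    (∀ n, ∃ m, ∀ (k : ℤ) (f : C(X, ℂ)),
        (⨆ x : K n, ‖f (hpow k (x : X))‖) ≤ ⨆ x : K m, ‖f (x : X)‖) ∧
    ((∀ n, h '' K n = K n) →
      ∀ (n : ℕ) (k : ℤ) (f : C(X, ℂ)),
        (⨆ x : K n, ‖f (hpow k (x : X))‖) = ⨆ x : K n, ‖f (x : X)‖) := by
  constructor
  · intro n
    obtain ⟨m, hm⟩ := hhK n
    exact ⟨m, fun k f => iSup_norm_comp_le_of_mapsTo f.continuous.continuousOn (hKcompact m)
      (mapsTo_iff_image_subset.mpr (hm k))⟩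
  · intro hinv n k f
    have hpow_zero' : ⇑(hpow 0) = id := by rw [hpow_zero]; rfl
    have hpow_succ' : ∀ k, ⇑(hpow (k + 1)) = h ∘ hpow k := fun k => by rw [hpow_succ]; rfl
    have hKinv : hpow k '' K n = K n :=
      image_iterates_eq_self (hpow := fun k => hpow k) hpow_zero' hpow_succ' h.injective (hinv n) k
    exact iSup_comp_eq_of_image_eq (F := fun x => ‖f x‖) hKinv

/-- Let `h : X → X` be a homeomorphism of a compactly countably generated space
`X = lim_→ K_n` such that for each `n` there is `m` with `h^k (K_n) ⊆ K_m` for all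
integers `k` (here `hpow k = h^k` denotes the `k`-th iterate of `h`).  Then
`α_k (f) = f ∘ h^k` defines a strongly bounded action of `ℤ` on the pro-C*-algebra
`C(X)`; if moreover `h (K_n) = K_n` for all `n`, then `α` is an inverse limit action:
`p_{K_n} (α_k f) = p_{K_n} (f)` for all `k`, `n`, `f`. -/
theorem homeo_iterates_action_strongly_bounded
    {X : Type*} [TopologicalSpace X] [T2Space X]
    (h : X ≃ₜ X)
    (hpow : ℤ → X ≃ₜ X)
    (hpow_zero : hpow 0 = Homeomorph.refl X)
    (hpow_succ : ∀ k : ℤ, hpow (k + 1) = (hpow k).trans h)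
    (K : ℕ → Set X)
    (hKcompact : ∀ n, IsCompact (K n))
    (hKmono : Monotone K)
    (hKcover : ∀ C : Set X, IsCompact C → ∃ n, C ⊆ K n)
    (hhK : ∀ n, ∃ m, ∀ k : ℤ, (hpow k) '' K n ⊆ K m) :
    (∀ n, ∃ m, ∀ (k : ℤ) (f : C(X, ℂ)),
        (⨆ x : K n, ‖f (hpow k (x : X))‖) ≤ ⨆ x : K m, ‖f (x : X)‖) ∧
    ((∀ n, h '' K n = K n) →
      ∀ (n : ℕ) (k : ℤ) (f : C(X, ℂ)),
        (⨆ x : K n, ‖f (hpow k (x : X))‖) = ⨆ x : K n, ‖f (x : X)‖) :=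
  homeo_iterates_action_strongly_bounded_general h hpow hpow_zero hpow_succ K hKcompact hhK
end

section
/- Let (G, α, A[τ_Γ]) be a pro-C*-dynamical system with α strongly bounded, (φ, H) a continuous representation of A[τ_Γ], and φ̃ the induced representation on L²(G,H) given by (φ̃(a)ξ)(s) = φ(α_{s^{-1}}(a))(ξ(s)). Then ker φ̃ ⊆ ker φ. -/
open MeasureTheory

/- Testing `T s (ξ s) = 0` against the indicator of a finite-measure open neighbourhood `U`
of `x` gives `T s v = 0` for a.e. `s ∈ U`; continuity and positivity of `μ` on open sets
upgrade this to every `s ∈ U`. -/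
theorem apply_eq_zero_of_forall_Lp_ae_apply_eq_zero
    {X E F : Type*} [TopologicalSpace X] [MeasurableSpace X] [OpensMeasurableSpace X]
    {μ : Measure X} [μ.IsOpenPosMeasure] [IsLocallyFiniteMeasure μ]
    [NormedAddCommGroup E] [Zero F] [TopologicalSpace F] [T2Space F]
    {p : ENNReal} {T : X → E → F} (hT : ∀ v, Continuous fun s => T s v)
    (h : ∀ ξ : Lp E p μ, ∀ᵐ s ∂μ, T s (ξ s) = 0) (x : X) (v : E) :
    T x v = 0 := by
  obtain ⟨U, hxU, hU, hμU⟩ := μ.exists_isOpen_measure_lt_top x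
  have hmem : MemLp (U.indicator fun _ => v) p μ :=
    memLp_indicator_const p hU.measurableSet v (Or.inr hμU.ne)
  have hae : (fun s => T s v) =ᵐ[μ.restrict U] 0 := by
    rw [Filter.EventuallyEq, ae_restrict_iff' hU.measurableSet]
    filter_upwards [h (hmem.toLp _), hmem.coeFn_toLp] with s hs hξ hsU
    rwa [hξ, Set.indicator_of_mem hsU] at hs
  exact μ.eqOn_open_of_ae_eq hae hU (hT v).continuousOn continuousOn_const hxU

theorem induced_representation_kernel_subset_general
    {A : Type*} [Ring A] [StarRing A] [Algebra ℂ A]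
    {G : Type*} [Group G] [TopologicalSpace G] [LocallyCompactSpace G]
    [MeasurableSpace G] [BorelSpace G]
    (μ : Measure G) [μ.IsHaarMeasure]
    (α : G → A ≃⋆ₐ[ℂ] A)
    (hmul : ∀ (s t : G) (a : A), α (s * t) a = α s (α t a))
    {H : Type*} [NormedAddCommGroup H] [InnerProductSpace ℂ H]
    (φ : A → H →L[ℂ] H)
    (hcont : ∀ a : A, Continuous fun s : G => φ (α s⁻¹ a))
    (φt : A → Lp H 2 μ →L[ℂ] Lp H 2 μ)
    (hφt : ∀ (a : A) (ξ : Lp H 2 μ),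
      (φt a ξ : G → H) =ᵐ[μ] fun s : G => φ (α s⁻¹ a) (ξ s)) :
    ∀ a : A, φt a = 0 → φ a = 0 := by
  intro a ha
  have hα_one : α 1 a = a := EquivLike.injective (α 1) (by rw [← hmul, one_mul])
  have hvanish : ∀ ξ : Lp H 2 μ, ∀ᵐ s ∂μ, φ (α s⁻¹ a) (ξ s) = 0 := fun ξ => by
    filter_upwards [hφt a ξ, Lp.coeFn_zero H 2 μ] with s hs hzero
    rw [← hs, ha, zero_apply, hzero, Pi.zero_apply]
  ext v
  simpa [hα_one] using apply_eq_zero_of_forall_Lp_ae_apply_eq_zero (T := fun s => φ (α s⁻¹ a))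
    (fun v => (hcont a).clm_apply continuous_const) hvanish 1 v

/-- Let `(G, α, A[τ_Γ])` be a pro-C*-dynamical system with `α` strongly bounded,
`φ` a continuous representation of `A` on a Hilbert space `H`, and `φ̃` the induced
representation on `L²(G, H)` given by `(φ̃ (a) ξ) (s) = φ (α_{s⁻¹} a) (ξ s)`.
Then `ker φ̃ ⊆ ker φ`. -/
theorem induced_representation_kernel_subset
    {A : Type*} [Ring A] [StarRing A] [Algebra ℂ A]
    {Λ : Type*} (p : SeminormFamily ℂ A Λ)
    {G : Type*} [Group G] [TopologicalSpace G] [IsTopologicalGroup G] [LocallyCompactSpace G]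
    [MeasurableSpace G] [BorelSpace G]
    (μ : Measure G) [μ.IsHaarMeasure]
    (α : G → A ≃⋆ₐ[ℂ] A)
    (hmul : ∀ (s t : G) (a : A), α (s * t) a = α s (α t a))
    {H : Type*} [NormedAddCommGroup H] [InnerProductSpace ℂ H] [CompleteSpace H]
    (φ : A → H →L[ℂ] H)
    (hadd : ∀ a b, φ (a + b) = φ a + φ b)
    (hmulφ : ∀ a b, φ (a * b) = (φ a).comp (φ b))
    (hstar : ∀ a, φ (star a) = ContinuousLinearMap.adjoint (φ a))
    (lam mu : Λ)
    (hφ : ∀ a : A, ‖φ a‖ ≤ p lam a)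
    (hsb : ∀ (t : G) (b : A), p lam (α t b) ≤ p mu b)
    (hcont : ∀ a : A, Continuous fun s : G => φ (α s⁻¹ a))
    (φt : A → Lp H 2 μ →L[ℂ] Lp H 2 μ)
    (hφt : ∀ (a : A) (ξ : Lp H 2 μ),
      (φt a ξ : G → H) =ᵐ[μ] fun s : G => φ (α s⁻¹ a) (ξ s)) :
    ∀ a : A, φt a = 0 → φ a = 0 :=
  induced_representation_kernel_subset_general μ α hmul φ hcont φt hφt
end

section
/- Let α be a strongly bounded action of a locally compact group G on a pro-C*-algebra A[τ_Γ]. The map α̃ : A → C_b(G, A) defined by α̃(a)(t) = α_{t^{-1}}(a) is a well-defined injective *-homomorphism with closed range, and for each λ there is μ such that p_λ(a) ≤ sup_{t∈G} p_λ(α̃(a)(t)) ≤ p_μ(a) for all a ∈ A; hence α̃ is a pro-C*-morphism onto its image which is a topological isomorphism onto a closed *-subalgebra. -/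
/-!
Evaluating `α̃ a` at `t = 1` returns `a`, which gives injectivity and the lower bound
`p_λ a ≤ sup_t p_λ (α_{t⁻¹} a)`; strong boundedness bounds every `p_λ (α_{t⁻¹} a)` by the
single `p_μ a`, which gives boundedness of `α̃ a` and the upper bound.
-/

open Function Set

namespace GroupAction

variable {G A F : Type*} [Group G] [EquivLike F A A] {α : G → F}

theorem apply_one (hmul : ∀ (s t : G) (a : A), α (s * t) a = α s (α t a)) (a : A) :
    α 1 a = a :=
  EquivLike.injective (α 1) (by rw [← hmul, one_mul])

theorem injective_apply_inv (hmul : ∀ (s t : G) (a : A), α (s * t) a = α s (α t a)) :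
    Injective fun (a : A) (t : G) => α t⁻¹ a := fun a b h => by
  simpa only [inv_one, apply_one hmul] using congrFun h 1

variable {q q' : A → ℝ}

theorem bddAbove_range_apply_inv (hq : ∀ (t : G) (a : A), q (α t a) ≤ q' a) (a : A) :
    BddAbove (range fun t : G => q (α t⁻¹ a)) :=
  ⟨q' a, forall_mem_range.2 fun t => hq t⁻¹ a⟩

theorem iSup_apply_inv_le (hq : ∀ (t : G) (a : A), q (α t a) ≤ q' a) (a : A) :
    ⨆ t : G, q (α t⁻¹ a) ≤ q' a :=
  ciSup_le fun t => hq t⁻¹ a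

theorem le_iSup_apply_inv (hmul : ∀ (s t : G) (a : A), α (s * t) a = α s (α t a))
    (hq : ∀ (t : G) (a : A), q (α t a) ≤ q' a) (a : A) :
    q a ≤ ⨆ t : G, q (α t⁻¹ a) := by
  simpa only [inv_one, apply_one hmul] using le_ciSup (bddAbove_range_apply_inv hq a) 1

end GroupAction

open GroupAction

theorem tilde_alpha_embedding_general
    {A : Type*} [Ring A] [StarRing A] [Algebra ℂ A]
    [UniformSpace A]
    {Λ : Type*} (p : SeminormFamily ℂ A Λ)
    {G : Type*} [Group G] [TopologicalSpace G] [IsTopologicalGroup G]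
    (α : G → A ≃⋆ₐ[ℂ] A)
    (hmul : ∀ (s t : G) (a : A), α (s * t) a = α s (α t a))
    (hcont : ∀ a : A, Continuous fun t : G => α t a)
    (hsb : ∀ lam : Λ, ∃ mu : Λ, ∀ (t : G) (a : A), p lam (α t a) ≤ p mu a) :
    -- well-definedness: each `α̃ a` is a bounded continuous `A`-valued function
    (∀ a : A, Continuous (fun t : G => α t⁻¹ a) ∧
      ∀ lam : Λ, BddAbove (Set.range fun t : G => p lam (α t⁻¹ a))) ∧
    -- `α̃` is a `*`-homomorphism into the pointwise operations of `C_b(G, A)`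
    (∀ (a b : A) (t : G), α t⁻¹ (a + b) = α t⁻¹ a + α t⁻¹ b) ∧
    (∀ (a b : A) (t : G), α t⁻¹ (a * b) = α t⁻¹ a * α t⁻¹ b) ∧
    (∀ (a : A) (t : G), α t⁻¹ (star a) = star (α t⁻¹ a)) ∧
    -- injectivity
    (∀ a b : A, (∀ t : G, α t⁻¹ a = α t⁻¹ b) → a = b) ∧
    -- the seminorm sandwich making `α̃` a topological isomorphism onto a closed
    -- `*`-subalgebra
    ∀ lam : Λ, ∃ mu : Λ, ∀ a : A,
      p lam a ≤ (⨆ t : G, p lam (α t⁻¹ a)) ∧ (⨆ t : G, p lam (α t⁻¹ a)) ≤ p mu a := by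
  refine ⟨fun a => ⟨(hcont a).comp continuous_inv, fun lam => ?_⟩,
    fun a b t => map_add (α t⁻¹) a b, fun a b t => map_mul (α t⁻¹) a b,
    fun a t => map_star (α t⁻¹) a, fun a b h => injective_apply_inv hmul (funext h),
    fun lam => ?_⟩
  · obtain ⟨mu, hmu⟩ := hsb lam
    exact bddAbove_range_apply_inv hmu a
  · obtain ⟨mu, hmu⟩ := hsb lam
    exact ⟨mu, fun a => ⟨le_iSup_apply_inv hmul hmu a, iSup_apply_inv_le hmu a⟩⟩

/-- For a strongly bounded action `α` of a locally compact group `G` on a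
pro-C*-algebra `A[τ_Γ]`, the map `α̃ : A → C_b(G, A)`, `α̃ (a) (t) = α_{t⁻¹} a`, is a
well-defined (each `α̃ a` is bounded and continuous) injective `*`-homomorphism, and
for each `λ` there is `μ` with `p_λ (a) ≤ sup_t p_λ (α̃ (a) (t)) ≤ p_μ (a)`; hence
`α̃` is a pro-C*-morphism which is a topological isomorphism onto its (closed)
range. -/
theorem tilde_alpha_embedding
    {A : Type*} [Ring A] [StarRing A] [Algebra ℂ A]
    [UniformSpace A] [IsUniformAddGroup A] [CompleteSpace A] [T2Space A]
    {Λ : Type*} [Nonempty Λ] (p : SeminormFamily ℂ A Λ)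
    (hp : WithSeminorms p) (hdir : Directed (· ≤ ·) p)
    (hC : ∀ (lam : Λ) (a : A), p lam (star a * a) = p lam a ^ 2)
    {G : Type*} [Group G] [TopologicalSpace G] [IsTopologicalGroup G] [LocallyCompactSpace G]
    (α : G → A ≃⋆ₐ[ℂ] A)
    (hmul : ∀ (s t : G) (a : A), α (s * t) a = α s (α t a))
    (hcont : ∀ a : A, Continuous fun t : G => α t a)
    (hsb : ∀ lam : Λ, ∃ mu : Λ, ∀ (t : G) (a : A), p lam (α t a) ≤ p mu a) :
    -- well-definedness: each `α̃ a` is a bounded continuous `A`-valued function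
    (∀ a : A, Continuous (fun t : G => α t⁻¹ a) ∧
      ∀ lam : Λ, BddAbove (Set.range fun t : G => p lam (α t⁻¹ a))) ∧
    -- `α̃` is a `*`-homomorphism into the pointwise operations of `C_b(G, A)`
    (∀ (a b : A) (t : G), α t⁻¹ (a + b) = α t⁻¹ a + α t⁻¹ b) ∧
    (∀ (a b : A) (t : G), α t⁻¹ (a * b) = α t⁻¹ a * α t⁻¹ b) ∧
    (∀ (a : A) (t : G), α t⁻¹ (star a) = star (α t⁻¹ a)) ∧
    -- injectivity
    (∀ a b : A, (∀ t : G, α t⁻¹ a = α t⁻¹ b) → a = b) ∧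
    -- the seminorm sandwich making `α̃` a topological isomorphism onto a closed
    -- `*`-subalgebra
    ∀ lam : Λ, ∃ mu : Λ, ∀ a : A,
      p lam a ≤ (⨆ t : G, p lam (α t⁻¹ a)) ∧ (⨆ t : G, p lam (α t⁻¹ a)) ≤ p mu a :=
  tilde_alpha_embedding_general p α hmul hcont hsb
end
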